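/- Let G be a connected graph on n vertices and let x ∈ ℝⁿ be a stochastic vector (nonnegative entries summing to 1). Then Φ_G(x) ≥ Φ(x)² · min_{i≠j} inf{ Φ_G(a) : a ∈ ℝⁿ, a_i = 1, a_j = 0 }, where the minimum is over all ordered pairs of distinct vertices i, j of G. (Equivalently, Φ_G(x) ≥ Φ(x)²/Res(G), where Res(G) is the resistive diameter of G.) -/

import Mathlib

open MeasureTheory ProbabilityTheory Real
open scoped ENNReal BigOperators

/-- The quadratic node potential `Φ(x) = Σᵢ (xᵢ - x̄)²`. -/
noncomputable def nodePotential {n : ℕ} (x : Fin n → ℝ) : ℝ :=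
  ∑ i, (x i - (∑ j, x j) / n) ^ 2

/-- The quadratic edge potential `Φ_G(x) = Σ_{{i,j} ∈ E(G)} (xᵢ - xⱼ)²`
(each unordered edge counted once). -/
noncomputable def edgePotential {n : ℕ} (G : SimpleGraph (Fin n)) [DecidableRel G.Adj]
    (x : Fin n → ℝ) : ℝ :=
  (1 / 2) * ∑ i, ∑ j, (if G.Adj i j then (x i - x j) ^ 2 else 0)

lemma edgePotential_nonneg {n : ℕ} (G : SimpleGraph (Fin n)) [DecidableRel G.Adj]
    (x : Fin n → ℝ) : 0 ≤ edgePotential G x := by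
  unfold edgePotential
  apply mul_nonneg (by norm_num)
  apply Finset.sum_nonneg; intro i _
  apply Finset.sum_nonneg; intro j _
  split <;> positivity

lemma edgePotential_affine {n : ℕ} (G : SimpleGraph (Fin n)) [DecidableRel G.Adj]
    (x : Fin n → ℝ) (c d : ℝ) (hd : d ≠ 0) :
    edgePotential G (fun k => (x k - c) / d) = edgePotential G x / d ^ 2 := by
  unfold edgePotential
  simp only [Finset.sum_div, mul_div_assoc]
  congr 1
  apply Finset.sum_congr rfl; intro i _
  apply Finset.sum_congr rfl; intro j _
  split
  · field_simp; ring
  · simp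

/-- For a connected graph `G` on `n` vertices and a stochastic vector
`x ∈ ℝⁿ`:
`Φ_G(x) ≥ Φ(x)² · min_{i ≠ j} inf{ Φ_G(a) : a ∈ ℝⁿ, aᵢ = 1, aⱼ = 0 }`,
the minimum being over all ordered pairs of distinct vertices (equivalently,
`Φ_G(x) ≥ Φ(x)²/Res(G)` where `Res(G)` is the resistive diameter). -/
theorem stmt9 (n : ℕ) (G : SimpleGraph (Fin n)) [DecidableRel G.Adj]
    (hconn : G.Connected)
    (x : Fin n → ℝ) (hx0 : ∀ i, 0 ≤ x i) (hx1 : (∑ i, x i) = 1) :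
    nodePotential x ^ 2 *
        sInf {v : ℝ | ∃ i j : Fin n, i ≠ j ∧
          v = sInf {w : ℝ | ∃ a : Fin n → ℝ, a i = 1 ∧ a j = 0 ∧ w = edgePotential G a}}
      ≤ edgePotential G x := by
  have hn : n ≠ 0 := by rintro rfl; simp at hx1
  have hne : Nonempty (Fin n) := ⟨⟨0, Nat.pos_of_ne_zero hn⟩⟩
  have hnR : (0:ℝ) < n := by exact_mod_cast Nat.pos_of_ne_zero hn
  obtain ⟨i, hi⟩ := Finite.exists_max x
  obtain ⟨j, hj⟩ := Finite.exists_min x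
  rcases eq_or_lt_of_le (hj i) with heq | hlt
  · -- all entries equal, node potential is 0
    have hall : ∀ k, x k = x j := fun k => le_antisymm (heq ▸ hi k) (hj k)
    have hnp : nodePotential x = 0 := by
      unfold nodePotential
      rw [hx1]
      have hxj : x j = 1 / n := by
        have : (∑ k, x k) = n * x j := by
          rw [Finset.sum_congr rfl (fun k _ => hall k)]
          simp [Finset.card_univ, mul_comm]
        field_simp [hx1 ▸ this]; linarith [hx1 ▸ this]
      apply Finset.sum_eq_zero; intro k _
      rw [hall k, hxj]; ring
    rw [hnp]
    simpa using edgePotential_nonneg G x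
  · -- x j < x i
    set d : ℝ := x i - x j with hdd
    have hd : 0 < d := by simp [hdd]; linarith
    have hij : i ≠ j := by rintro rfl; exact lt_irrefl _ hlt
    set S := {v : ℝ | ∃ i j : Fin n, i ≠ j ∧
          v = sInf {w : ℝ | ∃ a : Fin n → ℝ, a i = 1 ∧ a j = 0 ∧ w = edgePotential G a}} with hS
    -- every element of S is nonneg
    have hSnn : ∀ v ∈ S, 0 ≤ v := by
      rintro v ⟨p, q, hpq, rfl⟩
      apply le_csInf
      · exact ⟨edgePotential G (fun k => if k = p then 1 else 0),
          fun k => if k = p then 1 else 0, by simp, by simp [hpq.symm], rfl⟩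
      · rintro w ⟨a, _, _, rfl⟩
        exact edgePotential_nonneg G a
    have hSne : S.Nonempty := ⟨_, i, j, hij, rfl⟩
    have hM0 : 0 ≤ sInf S := le_csInf hSne hSnn
    -- inner inf bound via a = (x - x j)/d
    have h1 : sInf {w : ℝ | ∃ a : Fin n → ℝ, a i = 1 ∧ a j = 0 ∧ w = edgePotential G a}
        ≤ edgePotential G x / d ^ 2 := by
      apply csInf_le
      · exact ⟨0, by rintro w ⟨a, _, _, rfl⟩; exact edgePotential_nonneg G a⟩
      · exact ⟨fun k => (x k - x j) / d, by simp [hdd, div_self hd.ne', sub_ne_zero.mpr hlt.ne', hlt.ne'], by simp,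
          (edgePotential_affine G x (x j) d hd.ne').symm⟩
    have h2 : sInf S ≤ edgePotential G x / d ^ 2 := by
      refine le_trans (csInf_le ⟨0, hSnn⟩ ⟨i, j, hij, rfl⟩) h1
    -- node potential bound
    have hnp_le : nodePotential x ≤ d := by
      have hsq : nodePotential x = (∑ k, (x k)^2) - 1 / n := by
        unfold nodePotential
        rw [hx1]
        have : ∀ k : Fin n, (x k - 1 / n) ^ 2 = (x k)^2 - (2/n) * x k + 1/n^2 := by
          intro k; ring
        rw [Finset.sum_congr rfl (fun k _ => this k), Finset.sum_add_distrib,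
          Finset.sum_sub_distrib, ← Finset.mul_sum, hx1, Finset.sum_const,
          Finset.card_univ, Fintype.card_fin, nsmul_eq_mul]
        field_simp
        ring
      have hub : (∑ k, (x k)^2) ≤ x i := by
        calc (∑ k, (x k)^2) ≤ ∑ k, x k * x i := by
              apply Finset.sum_le_sum; intro k _
              rw [sq]
              exact mul_le_mul_of_nonneg_left (hi k) (hx0 k)
        _ = x i := by rw [← Finset.sum_mul, hx1, one_mul]
      have hlb : x j ≤ 1 / n := by
        have : (n : ℝ) * x j ≤ ∑ k, x k := by
          calc (n:ℝ) * x j = ∑ _k : Fin n, x j := by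
                simp [Finset.card_univ, mul_comm]
          _ ≤ ∑ k, x k := Finset.sum_le_sum (fun k _ => hj k)
        rw [hx1] at this
        rw [le_div_iff₀ hnR, mul_comm]; exact this
      rw [hsq, hdd]; linarith
    have hnp0 : 0 ≤ nodePotential x := by
      unfold nodePotential; positivity
    calc nodePotential x ^ 2 * sInf S
        ≤ d ^ 2 * (edgePotential G x / d ^ 2) := by
          apply mul_le_mul (by nlinarith) h2 hM0 (by positivity)
    _ = edgePotential G x := by field_simp
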